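/- For n ≥ 2, there exists no continuous map K : Z_n → ℂⁿ that is a section of the quotient map P : ℂⁿ → Z_n, i.e., no continuous K with P ∘ K = id on Z_n. -/

import Mathlib

/-!
Put `v = e_a - e_b` and rotate it: `t ↦ exp (t i) • v`. For a continuous section `K`, the tuple
`exp (-t i) • K (exp (t i) • v)` is a rearrangement of `v` depending continuously on `t`, hence
constant, so `K (-v) = -K v`. But `-v` is `v` with two entries swapped, so `K (-v) = K v`, and
`K v = 0` contradicts `K v` being a rearrangement of `v ≠ 0`.
-/

open Polynomial

/-- The distance `d_F` on representatives of `n`-element multisets of complex numbers: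
`dF u v = min over permutations σ of (sup metric distance between u and v ∘ σ)`. -/
noncomputable def dF {n : ℕ} (u v : Fin n → ℂ) : ℝ :=
  ⨅ σ : Equiv.Perm (Fin n), dist u (v ∘ σ)

/-- The metric `d_po` on monic complex polynomials of degree `n`: the maximum of the
absolute values of the differences of the coefficients of degree `< n`. -/
noncomputable def dpo (n : ℕ) (f g : Polynomial ℂ) : ℝ :=
  ⨆ j : Fin n, ‖f.coeff j - g.coeff j‖

open Complex Equiv

theorem Pi.single_sub_single_comp_swap {ι M : Type*} [DecidableEq ι] [AddGroup M] (a b : ι)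
    (x : M) :
    (Pi.single a x - Pi.single b x : ι → M) ∘ swap a b = -(Pi.single a x - Pi.single b x) := by
  change Pi.single a x ∘ swap a b - Pi.single b x ∘ swap a b = _
  rw [Pi.single_comp_equiv, Pi.single_comp_equiv, symm_swap, swap_apply_left, swap_apply_right,
    neg_sub]

theorem dF_le_dist {n : ℕ} (u v : Fin n → ℂ) : dF u v ≤ dist u v :=
  ciInf_le ⟨0, by rintro _ ⟨σ, rfl⟩; exact dist_nonneg⟩ 1

theorem continuous_comp_of_dF {n : ℕ} {X : Type*} [TopologicalSpace X]
    {K : (Fin n → ℂ) → (Fin n → ℂ)}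
    (hK : ∀ u : Fin n → ℂ, ∀ ε > (0:ℝ), ∃ δ > (0:ℝ), ∀ v : Fin n → ℂ,
      dF u v < δ → dist (K u) (K v) < ε)
    {w : X → Fin n → ℂ} (hw : Continuous w) : Continuous fun x => K (w x) := by
  refine continuous_iff_continuousAt.mpr fun x => Metric.tendsto_nhds.mpr fun ε hε => ?_
  obtain ⟨δ, hδ, hKδ⟩ := hK (w x) ε hε
  filter_upwards [(hw.tendsto x).eventually (Metric.ball_mem_nhds _ hδ)] with y hy
  rw [dist_comm]
  exact hKδ _ ((dF_le_dist _ _).trans_lt (by rwa [dist_comm]))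

theorem inv_smul_selection_smul_eq {ι X : Type*} [Finite ι] [TopologicalSpace X]
    [PreconnectedSpace X] {K : (ι → ℂ) → (ι → ℂ)} (hK : ∀ u, ∃ σ : Perm ι, K u = u ∘ σ)
    (v : ι → ℂ) {γ : X → ℂ} (hγ : Continuous γ) (hγ0 : ∀ x, γ x ≠ 0)
    (hKγ : Continuous fun x => K (γ x • v)) (x y : X) :
    (γ x)⁻¹ • K (γ x • v) = (γ y)⁻¹ • K (γ y • v) := by
  have hmaps : Set.MapsTo (fun x => (γ x)⁻¹ • K (γ x • v)) Set.univ
      (Set.range fun σ : Perm ι => v ∘ σ) := by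
    intro x _
    obtain ⟨σ, hσ⟩ := hK (γ x • v)
    exact ⟨σ, by simp only [hσ, Pi.smul_comp, inv_smul_smul₀ (hγ0 x)]⟩
  exact isPreconnected_univ.constant_of_mapsTo (Set.finite_range _).isDiscrete
    ((hγ.inv₀ hγ0).smul hKγ).continuousOn hmaps trivial trivial

/-- For `n ≥ 2`, there is no continuous section `K : Z_n → ℂⁿ` of the quotient map
`P : ℂⁿ → Z_n`: no map, well defined on multisets, choosing for each multiset a
tuple of its elements, is continuous from `(Z_n, d_F)` to `(ℂⁿ, d∞)`. -/
theorem stmt17 (n : ℕ) (hn : 2 ≤ n) :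
    ¬ ∃ K : (Fin n → ℂ) → (Fin n → ℂ),
      (∀ u : Fin n → ℂ, ∀ σ : Equiv.Perm (Fin n), K (u ∘ σ) = K u) ∧
      (∀ u : Fin n → ℂ, ∃ σ : Equiv.Perm (Fin n), K u = u ∘ σ) ∧
      (∀ u : Fin n → ℂ, ∀ ε > (0:ℝ), ∃ δ > (0:ℝ), ∀ v : Fin n → ℂ,
        dF u v < δ → dist (K u) (K v) < ε) := by
  rintro ⟨K, hsymm, hsel, hcont⟩
  let a : Fin n := ⟨0, by omega⟩
  let b : Fin n := ⟨1, hn⟩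
  let v : Fin n → ℂ := Pi.single a 1 - Pi.single b 1
  have hrot := inv_smul_selection_smul_eq hsel v (γ := fun t : ℝ => cexp (t * I))
    (by fun_prop) (fun _ => exp_ne_zero _)
    (continuous_comp_of_dF hcont (by fun_prop)) Real.pi 0
  simp only [exp_pi_mul_I, ofReal_zero, zero_mul, exp_zero, inv_one, one_smul, inv_neg,
    neg_one_smul] at hrot
  have hKv : K v = 0 := by
    rwa [← Pi.single_sub_single_comp_swap, hsymm, neg_eq_self] at hrot
  obtain ⟨σ, hσ⟩ := hsel v
  have hab : a ≠ b := by simp [a, b, Fin.ext_iff]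
  simpa [hKv, v, hab] using congrFun hσ (σ⁻¹ a)
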